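/- arXiv:1307.5343 — 8 statements merged into one kernel-verified Lean document; each statement's English description precedes it below -/
import Mathlib

section
/- Let d ≥ 1 and let A, Ā : ℝ^d → S^d, B : ℝ^d → ℝ^d, V : ℝ^d → ℝ. Assume there are constants κ̄ > 0, K₀ > 0, α₁ > 0, C₁ > 0, C₂ > 0 and β₁, γ₁ ∈ ℝ such that for all x, ξ ∈ ℝ^d: (a) A(x) is positive semidefinite and ξᵀĀ(x)ξ ≤ κ̄ ξᵀA(x)ξ; (b) Tr(A(x)) ≤ K₀; (c) xᵀA(x)x ≤ α₁(1+|x|²); (d) xᵀB(x) ≤ −β₁|x|² + C₁; (e) V(x) ≤ −γ₁|x|² + C₂; (f) max{β₁, γ₁} > 0, and if γ₁ < 0 then β₁² + 2γ₁κ̄α₁ > 0. Then there exist ε₀ > 0, C > 0 and real numbers 0 < c̲ < c̄ such that for every c ∈ (c̲, c̄) and every x ∈ ℝ^d: (1/2)c·Tr(A(x)) + (1/2)c²·xᵀĀ(x)x + c·xᵀB(x) + V(x) ≤ C − ε₀|x|². -/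
open Matrix

lemma quad_key (κ α₁ β₁ γ₁ : ℝ) (hκ : 0 < κ) (hα₁ : 0 < α₁)
    (hmax : 0 < max β₁ γ₁) (hcase : γ₁ < 0 → 0 < β₁ ^ 2 + 2 * γ₁ * κ * α₁) :
    ∃ ε > (0:ℝ), ∃ cl ch : ℝ, 0 < cl ∧ cl < ch ∧
      ∀ c ∈ Set.Ioo cl ch, (1/2) * c^2 * κ * α₁ - c * β₁ - γ₁ ≤ -ε := by
  have hka : 0 < κ * α₁ := mul_pos hκ hα₁
  rcases le_or_gt β₁ 0 with hβ | hβ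
  · have hγ : 0 < γ₁ := by
      rcases lt_max_iff.mp hmax with h | h
      · linarith
      · exact h
    set ch := min 1 (γ₁/(2*(κ*α₁/2 + (-β₁) + 1))) with hch
    have hden : 0 < κ*α₁/2 + (-β₁) + 1 := by linarith
    have hchpos : 0 < ch := lt_min one_pos (by positivity)
    refine ⟨γ₁/2, by positivity, ch/2, ch, by positivity, by linarith, ?_⟩
    rintro c ⟨hc1, hc2⟩
    have hc0 : 0 < c := lt_trans (by positivity) hc1
    have hch1 : ch ≤ 1 := min_le_left _ _
    have hch2 : ch ≤ γ₁/(2*(κ*α₁/2 + (-β₁) + 1)) := min_le_right _ _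
    have hc1' : c ≤ 1 := le_of_lt (lt_of_lt_of_le hc2 hch1)
    have hsq : c^2 ≤ c := by nlinarith
    have : (κ*α₁/2 + (-β₁) + 1) * ch ≤ γ₁/2 := by
      have h2 := (le_div_iff₀ (by positivity : (0:ℝ) < 2*(κ*α₁/2 + (-β₁) + 1))).mp hch2
      nlinarith
    nlinarith [mul_pos hka hc0]
  · set c₀ := β₁ / (κ*α₁) with hc₀
    have hc₀pos : 0 < c₀ := div_pos hβ hka
    have hE : 0 < (β₁^2 + 2*γ₁*κ*α₁) / (2*κ*α₁) := by
      apply div_pos _ (by linarith)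
      rcases lt_or_ge γ₁ 0 with h | h
      · exact hcase h
      · nlinarith
    set E := (β₁^2 + 2*γ₁*κ*α₁) / (2*κ*α₁) with hEdef
    set δ := min (c₀/2) (Real.sqrt (E/(κ*α₁))) with hδ
    have hδpos : 0 < δ := lt_min (by positivity) (Real.sqrt_pos.mpr (by positivity))
    have hδsq : δ^2 ≤ E/(κ*α₁) := by
      have h1 : δ ≤ Real.sqrt (E/(κ*α₁)) := min_le_right _ _
      nlinarith [Real.sq_sqrt (le_of_lt (div_pos hE hka)), Real.sqrt_nonneg (E/(κ*α₁)), hδpos]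
    refine ⟨E/2, by positivity, c₀ - δ, c₀ + δ, ?_, by linarith, ?_⟩
    · have : δ ≤ c₀/2 := min_le_left _ _
      linarith
    rintro c ⟨hc1, hc2⟩
    have hvertex : (1/2) * c^2 * κ * α₁ - c * β₁ - γ₁
        = (κ*α₁/2) * (c - c₀)^2 - E := by
      rw [hc₀, hEdef]; field_simp; ring
    have hcd : (c - c₀)^2 ≤ δ^2 := by nlinarith
    have : (κ*α₁/2) * (c - c₀)^2 ≤ E/2 := by
      have h2 := (le_div_iff₀ hka).mp hδsq
      nlinarith
    linarith [hvertex, this]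

lemma arith (d : ℕ) (κ K₀ α₁ C₁ C₂ β₁ γ₁ c ch ε T Q P bB v r : ℝ)
    (hκ : 0 < κ) (hK₀ : 0 < K₀) (hα₁ : 0 < α₁) (hC₁ : 0 < C₁)
    (hc0 : 0 < c) (hc2 : c < ch) (hchpos : 0 < ch) (hr : 0 ≤ r)
    (h1 : T ≤ K₀) (h2 : Q ≤ κ * P) (h3 : P ≤ α₁ * (1 + r))
    (h4 : bB ≤ -β₁ * r + C₁) (h5 : v ≤ -γ₁ * r + C₂)
    (hq : (1/2) * c^2 * κ * α₁ - c * β₁ - γ₁ ≤ -ε) :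
    (1 / 2) * c * T + (1 / 2) * c ^ 2 * Q + c * bB + v
      ≤ ((1/2)*ch*K₀ + (1/2)*ch^2*κ*α₁ + ch*C₁ + C₂) - ε * r := by
  have hcsq : 0 ≤ c^2 := sq_nonneg c
  have t1 : (1/2) * c * T ≤ (1/2) * ch * K₀ := by
    linarith [mul_le_mul_of_nonneg_left h1 hc0.le,
      mul_le_mul_of_nonneg_right hc2.le hK₀.le]
  have hQ : Q ≤ κ * (α₁ * (1 + r)) := by
    calc Q ≤ κ * P := h2
      _ ≤ κ * (α₁ * (1 + r)) := mul_le_mul_of_nonneg_left h3 hκ.le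
  have t2 : (1/2) * c^2 * Q ≤ (1/2)*(c^2*κ*α₁) + (1/2)*(c^2*κ*α₁*r) := by
    have h := mul_le_mul_of_nonneg_left hQ hcsq
    linarith [h]
  have t4 : c^2*κ*α₁ ≤ ch^2*κ*α₁ := by
    have hcc : c^2 ≤ ch^2 := by nlinarith
    exact mul_le_mul_of_nonneg_right (mul_le_mul_of_nonneg_right hcc hκ.le) hα₁.le
  have t3 : c * bB ≤ -(c*β₁*r) + c*C₁ := by
    have h := mul_le_mul_of_nonneg_left h4 hc0.le
    linarith [h]
  have t5 : c*C₁ ≤ ch*C₁ := mul_le_mul_of_nonneg_right hc2.le hC₁.le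
  have t6 : (1/2)*(c^2*κ*α₁*r) - c*β₁*r - γ₁*r ≤ -(ε*r) := by
    have h := mul_le_mul_of_nonneg_right hq hr
    linarith [h]
  linarith

/-- existence of a Lyapunov function `φ₀(x) = (c/2)|x|²` on `ℝ^d`:
under the growth conditions on `A, Ā, B, V`, there are `ε₀, C > 0` and a range
`(c̲, c̄)` of admissible constants `c` for which
`𝔉[φ₀](x) = (1/2)c Tr(A(x)) + (1/2)c² xᵀĀ(x)x + c xᵀB(x) + V(x) ≤ C - ε₀|x|²`. -/
theorem stmt0 (d : ℕ) (hd : 1 ≤ d)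
    (A Abar : (Fin d → ℝ) → Matrix (Fin d) (Fin d) ℝ)
    (B : (Fin d → ℝ) → (Fin d → ℝ)) (V : (Fin d → ℝ) → ℝ)
    (κ K₀ α₁ C₁ C₂ β₁ γ₁ : ℝ)
    (hκ : 0 < κ) (hK₀ : 0 < K₀) (hα₁ : 0 < α₁) (hC₁ : 0 < C₁) (hC₂ : 0 < C₂)
    (hAsymm : ∀ x, (A x).IsSymm) (hAbarsymm : ∀ x, (Abar x).IsSymm)
    (hApsd : ∀ x, (A x).PosSemidef)
    (hAbarA : ∀ (x ξ : Fin d → ℝ), ξ ⬝ᵥ (Abar x).mulVec ξ ≤ κ * (ξ ⬝ᵥ (A x).mulVec ξ))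
    (hAtr : ∀ x, (A x).trace ≤ K₀)
    (hAx : ∀ x : Fin d → ℝ, x ⬝ᵥ (A x).mulVec x ≤ α₁ * (1 + x ⬝ᵥ x))
    (hB : ∀ x : Fin d → ℝ, x ⬝ᵥ B x ≤ -β₁ * (x ⬝ᵥ x) + C₁)
    (hV : ∀ x : Fin d → ℝ, V x ≤ -γ₁ * (x ⬝ᵥ x) + C₂)
    (hmax : 0 < max β₁ γ₁)
    (hcase : γ₁ < 0 → 0 < β₁ ^ 2 + 2 * γ₁ * κ * α₁) :
    ∃ ε₀ > (0 : ℝ), ∃ C > (0 : ℝ), ∃ cl ch : ℝ, 0 < cl ∧ cl < ch ∧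
      ∀ c ∈ Set.Ioo cl ch, ∀ x : Fin d → ℝ,
        (1 / 2) * c * (A x).trace + (1 / 2) * c ^ 2 * (x ⬝ᵥ (Abar x).mulVec x)
          + c * (x ⬝ᵥ B x) + V x ≤ C - ε₀ * (x ⬝ᵥ x) := by
  obtain ⟨ε, hε, cl, ch, hcl, hclch, hquad⟩ := quad_key κ α₁ β₁ γ₁ hκ hα₁ hmax hcase
  have hchpos : 0 < ch := lt_trans hcl hclch
  refine ⟨ε, hε, (1/2)*ch*K₀ + (1/2)*ch^2*κ*α₁ + ch*C₁ + C₂, by positivity,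
    cl, ch, hcl, hclch, ?_⟩
  rintro c hc x
  obtain ⟨hc1, hc2⟩ := hc
  have hc0 : 0 < c := lt_trans hcl hc1
  have hr : 0 ≤ x ⬝ᵥ x := by
    simp only [dotProduct]
    exact Finset.sum_nonneg fun i _ => mul_self_nonneg _
  have hq : (1/2) * c^2 * κ * α₁ - c * β₁ - γ₁ ≤ -ε := hquad c ⟨hc1, hc2⟩
  exact arith d κ K₀ α₁ C₁ C₂ β₁ γ₁ c ch ε ((A x).trace) (x ⬝ᵥ (Abar x).mulVec x)
    (x ⬝ᵥ (A x).mulVec x) (x ⬝ᵥ B x) (V x) (x ⬝ᵥ x) hκ hK₀ hα₁ hC₁ hc0 hc2 hchpos hr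
    (hAtr x) (hAbarA x x) (hAx x) (hB x) (hV x) hq
end

section
/- Let d ≥ 1 and let A, Ā : ℝ^d → S^d, B : ℝ^d → ℝ^d, V : ℝ^d → ℝ. Assume there are constants κ̲ > 0, K₀ > 0, C₁ > 0, C₂ > 0 and β₁, γ₂ ∈ ℝ such that for all x, ξ ∈ ℝ^d: (a) A(x) is positive semidefinite and ξᵀĀ(x)ξ ≥ κ̲ ξᵀA(x)ξ; (b) Tr(A(x)) ≤ K₀; (c) xᵀB(x) ≤ −β₁|x|² + C₁; (d) V(x) ≥ −γ₂|x|² − C₂. Assume furthermore that either β₁ > 0, or else there exist α₂, C₃ > 0 with xᵀA(x)x ≥ α₂|x|² − C₃ for all x. Then there exist c̃ > 0, ε > 0 and C ≥ 0 such that for every x ∈ ℝ^d: −(1/2)c̃·Tr(A(x)) + (1/2)c̃²·xᵀĀ(x)x − c̃·xᵀB(x) + V(x) ≥ ε|x|² − C. -/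
/-!
With `q = |x|²` and `a = xᵀA(x)x`, the hypotheses bound the expression from below, for every
`c̃ ≥ 0`, by `(κ̲α c̃²/2 + β₁c̃ − γ₂) q − C(c̃)`, provided `a ≥ α q − C₃`. Such a bound on `a` holds
with `α = 0` when `β₁ > 0` (as `A` is positive semidefinite) and with `α = α₂ > 0` otherwise. In either
case the coefficient of `q` is a quadratic in `c̃` that tends to `+∞`, so it is positive for some `c̃ > 0`.
-/

open Matrix Filter

theorem tendsto_mul_sq_add_mul_atTop {a b : ℝ} (ha : 0 ≤ a) (hab : 0 < a ∨ 0 < b) :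
    Tendsto (fun t : ℝ => a * t ^ 2 + b * t) atTop atTop := by
  rcases hab with ha | hb
  · have : Tendsto (fun t : ℝ => t * (a * t + b)) atTop atTop :=
      tendsto_id.atTop_mul_atTop₀
        (tendsto_atTop_add_const_right _ b (tendsto_id.const_mul_atTop ha))
    exact this.congr fun t => by ring
  · refine tendsto_atTop_mono' _ ?_ (tendsto_id.const_mul_atTop hb)
    filter_upwards [eventually_ge_atTop 0] with t ht
    have := mul_nonneg ha (sq_nonneg t)
    simp only [id]
    linarith

theorem exists_pos_lt_mul_sq_add_mul {a b : ℝ} (ha : 0 ≤ a) (hab : 0 < a ∨ 0 < b) (γ : ℝ) :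
    ∃ t > 0, γ < a * t ^ 2 + b * t :=
  ((tendsto_mul_sq_add_mul_atTop ha hab).eventually_gt_atTop γ).and (eventually_gt_atTop 0)
    |>.exists.imp fun _ h => ⟨h.2, h.1⟩

theorem exists_quadForm_lower_bound {d : ℕ} {A : (Fin d → ℝ) → Matrix (Fin d) (Fin d) ℝ}
    (hA : ∀ x, (A x).PosSemidef) {β : ℝ}
    (h : 0 < β ∨ ∃ α > (0 : ℝ), ∃ C > (0 : ℝ), ∀ x : Fin d → ℝ,
      α * (x ⬝ᵥ x) - C ≤ x ⬝ᵥ (A x).mulVec x) :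
    ∃ α ≥ (0 : ℝ), ∃ C ≥ (0 : ℝ), (0 < α ∨ 0 < β) ∧
      ∀ x : Fin d → ℝ, α * (x ⬝ᵥ x) - C ≤ x ⬝ᵥ (A x).mulVec x := by
  rcases h with hβ | ⟨α, hα, C, hC, hAx⟩
  · refine ⟨0, le_rfl, 0, le_rfl, Or.inr hβ, fun x => ?_⟩
    simpa using (hA x).dotProduct_mulVec_nonneg x
  · exact ⟨α, hα.le, C, hC.le, Or.inl hα, hAx⟩

theorem lower_bound_of_growth_bounds {ct κ K₀ C₁ C₂ C₃ α β₁ γ₂ q tr a abar b v : ℝ}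
    (hct : 0 ≤ ct) (hκ : 0 ≤ κ) (htr : tr ≤ K₀) (habar : κ * a ≤ abar) (ha : α * q - C₃ ≤ a)
    (hb : b ≤ -β₁ * q + C₁) (hv : -γ₂ * q - C₂ ≤ v) :
    (κ * α / 2 * ct ^ 2 + β₁ * ct - γ₂) * q - (κ * C₃ / 2 * ct ^ 2 + ct * K₀ / 2 + ct * C₁ + C₂) ≤
      -(1 / 2) * ct * tr + (1 / 2) * ct ^ 2 * abar - ct * b + v := by
  linear_combination (ct / 2) * htr + (ct ^ 2 / 2) * habar + (κ * ct ^ 2 / 2) * ha + ct * hb + hv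

theorem stmt1_general (d : ℕ)
    (A Abar : (Fin d → ℝ) → Matrix (Fin d) (Fin d) ℝ)
    (B : (Fin d → ℝ) → (Fin d → ℝ)) (V : (Fin d → ℝ) → ℝ)
    (κ K₀ C₁ C₂ β₁ γ₂ : ℝ)
    (hκ : 0 < κ) (hK₀ : 0 < K₀) (hC₁ : 0 < C₁) (hC₂ : 0 < C₂)
    (hApsd : ∀ x, (A x).PosSemidef)
    (hAbarA : ∀ (x ξ : Fin d → ℝ), κ * (ξ ⬝ᵥ (A x).mulVec ξ) ≤ ξ ⬝ᵥ (Abar x).mulVec ξ)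
    (hAtr : ∀ x, (A x).trace ≤ K₀)
    (hB : ∀ x : Fin d → ℝ, x ⬝ᵥ B x ≤ -β₁ * (x ⬝ᵥ x) + C₁)
    (hV : ∀ x : Fin d → ℝ, -γ₂ * (x ⬝ᵥ x) - C₂ ≤ V x)
    (hcase : 0 < β₁ ∨ ∃ α₂ > (0 : ℝ), ∃ C₃ > (0 : ℝ), ∀ x : Fin d → ℝ,
      α₂ * (x ⬝ᵥ x) - C₃ ≤ x ⬝ᵥ (A x).mulVec x) :
    ∃ ct > (0 : ℝ), ∃ ε > (0 : ℝ), ∃ C ≥ (0 : ℝ), ∀ x : Fin d → ℝ,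
      ε * (x ⬝ᵥ x) - C ≤
        -(1 / 2) * ct * (A x).trace + (1 / 2) * ct ^ 2 * (x ⬝ᵥ (Abar x).mulVec x)
          - ct * (x ⬝ᵥ B x) + V x := by
  obtain ⟨α, hα, C₃, hC₃, hαβ, hA⟩ := exists_quadForm_lower_bound hApsd hcase
  obtain ⟨ct, hct, hε⟩ := exists_pos_lt_mul_sq_add_mul (a := κ * α / 2) (by positivity)
    (hαβ.imp_left fun hα => by positivity) γ₂
  refine ⟨ct, hct, κ * α / 2 * ct ^ 2 + β₁ * ct - γ₂, by linarith,
    κ * C₃ / 2 * ct ^ 2 + ct * K₀ / 2 + ct * C₁ + C₂, by positivity, fun x => ?_⟩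
  exact lower_bound_of_growth_bounds hct.le hκ.le (hAtr x) (hAbarA x x) (hA x) (hB x) (hV x)

/-- the function `ψ₀(x) = -(c̃/2)|x|²` satisfies
`𝔉[ψ₀](x) = -(1/2)c̃ Tr(A(x)) + (1/2)c̃² xᵀĀ(x)x - c̃ xᵀB(x) + V(x) ≥ ε|x|² - C`
for a suitable `c̃ > 0`, under the stated growth conditions. -/
theorem stmt1 (d : ℕ) (hd : 1 ≤ d)
    (A Abar : (Fin d → ℝ) → Matrix (Fin d) (Fin d) ℝ)
    (B : (Fin d → ℝ) → (Fin d → ℝ)) (V : (Fin d → ℝ) → ℝ)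
    (κ K₀ C₁ C₂ β₁ γ₂ : ℝ)
    (hκ : 0 < κ) (hK₀ : 0 < K₀) (hC₁ : 0 < C₁) (hC₂ : 0 < C₂)
    (hAsymm : ∀ x, (A x).IsSymm) (hAbarsymm : ∀ x, (Abar x).IsSymm)
    (hApsd : ∀ x, (A x).PosSemidef)
    (hAbarA : ∀ (x ξ : Fin d → ℝ), κ * (ξ ⬝ᵥ (A x).mulVec ξ) ≤ ξ ⬝ᵥ (Abar x).mulVec ξ)
    (hAtr : ∀ x, (A x).trace ≤ K₀)
    (hB : ∀ x : Fin d → ℝ, x ⬝ᵥ B x ≤ -β₁ * (x ⬝ᵥ x) + C₁)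
    (hV : ∀ x : Fin d → ℝ, -γ₂ * (x ⬝ᵥ x) - C₂ ≤ V x)
    (hcase : 0 < β₁ ∨ ∃ α₂ > (0 : ℝ), ∃ C₃ > (0 : ℝ), ∀ x : Fin d → ℝ,
      α₂ * (x ⬝ᵥ x) - C₃ ≤ x ⬝ᵥ (A x).mulVec x) :
    ∃ ct > (0 : ℝ), ∃ ε > (0 : ℝ), ∃ C ≥ (0 : ℝ), ∀ x : Fin d → ℝ,
      ε * (x ⬝ᵥ x) - C ≤
        -(1 / 2) * ct * (A x).trace + (1 / 2) * ct ^ 2 * (x ⬝ᵥ (Abar x).mulVec x)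
          - ct * (x ⬝ᵥ B x) + V x :=
  stmt1_general d A Abar B V κ K₀ C₁ C₂ β₁ γ₂ hκ hK₀ hC₁ hC₂ hApsd hAbarA hAtr hB hV hcase
end

section
/- Let E ⊆ ℝ^d be open, let A, Ā : E → S^d, B : E → ℝ^d, V : E → ℝ, and let κ̲ > 0 satisfy κ̲ ξᵀA(x)ξ ≤ ξᵀĀ(x)ξ for all x ∈ E and ξ ∈ ℝ^d. For u ∈ C²(E) define 𝔉[u] := (1/2)Σ_{i,j} A_{ij} ∂²_{x_i x_j}u + (1/2)(∇u)ᵀĀ∇u + B·∇u + V, and for ψ ∈ C²(E) define the linear operator 𝒧^ψ w := (1/2)Σ_{i,j} A_{ij} ∂²_{x_i x_j}w + (B + Ā∇ψ)·∇w. Then for any φ, ψ ∈ C²(E), the positive function w := exp(−κ̲(ψ − φ)) belongs to C²(E) and satisfies the pointwise inequality 𝒧^ψ w ≤ κ̲ w (𝔉[φ] − 𝔉[ψ]) on E. -/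
/-
With `u := -κ(ψ - φ)` and `w = exp u`, the chain rule gives the Hopf–Cole identity
`𝒧^ψ w = w (𝒧^ψ u + ½ ∇uᵀ A ∇u)`. Since `𝒧^ψ` is linear and, for `a := ∇ψ - ∇φ` and symmetric `Ā`,
`𝔉[φ] - 𝔉[ψ] = 𝒧^ψ φ - 𝒧^ψ ψ + ½ aᵀ Ā a`, this becomes
`𝒧^ψ w = κ w (𝔉[φ] - 𝔉[ψ]) - ½ κ w (aᵀ Ā a - κ aᵀ A a)`,
and the last bracket is nonnegative by the ellipticity comparison `κ A ≤ Ā`.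
-/

open Matrix

namespace Stmt2

/-- First partial derivative `∂_{x_i} u (x)`. -/
noncomputable def pd1 (d : ℕ) (u : (Fin d → ℝ) → ℝ) (i : Fin d) (x : Fin d → ℝ) : ℝ :=
  fderiv ℝ u x (Pi.single i 1)

/-- Second partial derivative `∂²_{x_i x_j} u (x)`. -/
noncomputable def pd2 (d : ℕ) (u : (Fin d → ℝ) → ℝ) (i j : Fin d) (x : Fin d → ℝ) : ℝ :=
  fderiv ℝ (fun y => fderiv ℝ u y (Pi.single j 1)) x (Pi.single i 1)

/-- Gradient `∇u(x)`. -/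
noncomputable def grad (d : ℕ) (u : (Fin d → ℝ) → ℝ) (x : Fin d → ℝ) : Fin d → ℝ :=
  fun i => pd1 d u i x

/-- The semilinear operator
`𝔉[u] = (1/2)Σ A_{ij} ∂²_{ij} u + (1/2)(∇u)ᵀ Ā ∇u + B·∇u + V`. -/
noncomputable def Fop (d : ℕ) (A Abar : (Fin d → ℝ) → Matrix (Fin d) (Fin d) ℝ)
    (B : (Fin d → ℝ) → Fin d → ℝ) (V : (Fin d → ℝ) → ℝ)
    (u : (Fin d → ℝ) → ℝ) (x : Fin d → ℝ) : ℝ :=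
  (1 / 2) * ∑ i, ∑ j, A x i j * pd2 d u i j x
    + (1 / 2) * (grad d u x ⬝ᵥ (Abar x).mulVec (grad d u x))
    + (B x ⬝ᵥ grad d u x) + V x

/-- The linear operator `𝒧^ψ w = (1/2)Σ A_{ij} ∂²_{ij} w + (B + Ā∇ψ)·∇w`. -/
noncomputable def Lop (d : ℕ) (A Abar : (Fin d → ℝ) → Matrix (Fin d) (Fin d) ℝ)
    (B : (Fin d → ℝ) → Fin d → ℝ) (ψ : (Fin d → ℝ) → ℝ)
    (w : (Fin d → ℝ) → ℝ) (x : Fin d → ℝ) : ℝ :=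
  (1 / 2) * ∑ i, ∑ j, A x i j * pd2 d w i j x
    + ((B x + (Abar x).mulVec (grad d ψ x)) ⬝ᵥ grad d w x)

section PartialDerivatives

variable {d : ℕ} {f g u : (Fin d → ℝ) → ℝ} {x : Fin d → ℝ} {i j : Fin d}

theorem pd2_eq_pd1_pd1 : pd2 d u i j x = pd1 d (pd1 d u j) i x := rfl

theorem pd1_congr (h : f =ᶠ[nhds x] g) : pd1 d f i x = pd1 d g i x := by
  rw [pd1, pd1, h.fderiv_eq]

theorem pd1_sub (hf : DifferentiableAt ℝ f x) (hg : DifferentiableAt ℝ g x) :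
    pd1 d (fun y => f y - g y) i x = pd1 d f i x - pd1 d g i x := by
  simp only [pd1, fderiv_fun_sub hf hg, _root_.sub_apply]

theorem pd1_const_mul (hf : DifferentiableAt ℝ f x) (c : ℝ) :
    pd1 d (fun y => c * f y) i x = c * pd1 d f i x := by
  simp only [pd1, fderiv_const_mul hf c, _root_.smul_apply, smul_eq_mul]

theorem pd1_mul (hf : DifferentiableAt ℝ f x) (hg : DifferentiableAt ℝ g x) :
    pd1 d (fun y => f y * g y) i x = pd1 d f i x * g x + f x * pd1 d g i x := by
  simp only [pd1, fderiv_fun_mul hf hg, _root_.add_apply,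
    _root_.smul_apply, smul_eq_mul]
  ring

theorem pd1_exp (hu : DifferentiableAt ℝ u x) :
    pd1 d (fun y => Real.exp (u y)) i x = Real.exp (u x) * pd1 d u i x := by
  simp only [pd1, hu.hasFDerivAt.exp.fderiv, _root_.smul_apply, smul_eq_mul]

theorem eventually_differentiableAt_of_contDiffAt (hu : ContDiffAt ℝ 2 u x) :
    ∀ᶠ y in nhds x, DifferentiableAt ℝ u y :=
  (hu.eventually (by simp)).mono fun _ hy => hy.differentiableAt (by norm_num)

theorem differentiableAt_pd1 (hu : ContDiffAt ℝ 2 u x) : DifferentiableAt ℝ (pd1 d u i) x :=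
  ((hu.fderiv_right (m := 1) le_rfl).clm_apply contDiffAt_const).differentiableAt one_ne_zero

theorem pd2_sub (hf : ContDiffAt ℝ 2 f x) (hg : ContDiffAt ℝ 2 g x) :
    pd2 d (fun y => f y - g y) i j x = pd2 d f i j x - pd2 d g i j x := by
  have h : pd1 d (fun y => f y - g y) j =ᶠ[nhds x] fun y => pd1 d f j y - pd1 d g j y := by
    filter_upwards [eventually_differentiableAt_of_contDiffAt hf, eventually_differentiableAt_of_contDiffAt hg]
      with y hfy hgy using pd1_sub hfy hgy
  rw [pd2_eq_pd1_pd1, pd1_congr h, pd1_sub (differentiableAt_pd1 hf) (differentiableAt_pd1 hg)]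
  rfl

theorem pd2_const_mul (hf : ContDiffAt ℝ 2 f x) (c : ℝ) :
    pd2 d (fun y => c * f y) i j x = c * pd2 d f i j x := by
  have h : pd1 d (fun y => c * f y) j =ᶠ[nhds x] fun y => c * pd1 d f j y := by
    filter_upwards [eventually_differentiableAt_of_contDiffAt hf] with y hfy using pd1_const_mul hfy c
  rw [pd2_eq_pd1_pd1, pd1_congr h, pd1_const_mul (differentiableAt_pd1 hf)]
  rfl

theorem pd2_exp (hu : ContDiffAt ℝ 2 u x) :
    pd2 d (fun y => Real.exp (u y)) i j x
      = Real.exp (u x) * (pd2 d u i j x + pd1 d u i x * pd1 d u j x) := by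
  have h : pd1 d (fun y => Real.exp (u y)) j =ᶠ[nhds x]
      fun y => Real.exp (u y) * pd1 d u j y := by
    filter_upwards [eventually_differentiableAt_of_contDiffAt hu] with y huy using pd1_exp huy
  have hu1 : DifferentiableAt ℝ u x := hu.differentiableAt (by norm_num)
  rw [pd2_eq_pd1_pd1, pd1_congr h, pd1_mul (hu1.exp) (differentiableAt_pd1 hu), pd1_exp hu1,
    pd2_eq_pd1_pd1]
  ring

end PartialDerivatives

theorem dotProduct_mulVec_self_eq_sum_sum {n R : Type*} [Fintype n] [CommSemiring R]
    (M : Matrix n n R) (v : n → R) :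
    v ⬝ᵥ M *ᵥ v = ∑ i, ∑ j, M i j * (v i * v j) := by
  simp only [dotProduct, mulVec, Finset.mul_sum]
  exact Finset.sum_congr rfl fun i _ => Finset.sum_congr rfl fun j _ => by ring

theorem dotProduct_mulVec_comm_of_isSymm {n R : Type*} [Fintype n] [CommSemiring R]
    {M : Matrix n n R} (hM : M.IsSymm) (v w : n → R) : v ⬝ᵥ M *ᵥ w = w ⬝ᵥ M *ᵥ v := by
  rw [dotProduct_mulVec, ← mulVec_transpose, hM.eq, dotProduct_comm]

section Operators

variable {d : ℕ} {A Abar : (Fin d → ℝ) → Matrix (Fin d) (Fin d) ℝ} {B : (Fin d → ℝ) → Fin d → ℝ}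
  {f g u ψ : (Fin d → ℝ) → ℝ} {x : Fin d → ℝ}

theorem grad_sub (hf : DifferentiableAt ℝ f x) (hg : DifferentiableAt ℝ g x) :
    grad d (fun y => f y - g y) x = grad d f x - grad d g x :=
  funext fun _ => pd1_sub hf hg

theorem grad_const_mul (hf : DifferentiableAt ℝ f x) (c : ℝ) :
    grad d (fun y => c * f y) x = c • grad d f x :=
  funext fun _ => pd1_const_mul hf c

theorem Lop_sub (hf : ContDiffAt ℝ 2 f x) (hg : ContDiffAt ℝ 2 g x) :
    Lop d A Abar B ψ (fun y => f y - g y) x = Lop d A Abar B ψ f x - Lop d A Abar B ψ g x := by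
  simp only [Lop, pd2_sub hf hg, grad_sub (hf.differentiableAt two_ne_zero)
    (hg.differentiableAt two_ne_zero), mul_sub, Finset.sum_sub_distrib, dotProduct_sub]
  ring

theorem Lop_const_mul (hf : ContDiffAt ℝ 2 f x) (c : ℝ) :
    Lop d A Abar B ψ (fun y => c * f y) x = c * Lop d A Abar B ψ f x := by
  simp only [Lop, pd2_const_mul hf, grad_const_mul (hf.differentiableAt two_ne_zero),
    dotProduct_smul, smul_eq_mul, mul_left_comm _ c, ← Finset.mul_sum]
  ring

theorem Lop_exp (hu : ContDiffAt ℝ 2 u x) :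
    Lop d A Abar B ψ (fun y => Real.exp (u y)) x
      = Real.exp (u x) * (Lop d A Abar B ψ u x
          + 1 / 2 * (grad d u x ⬝ᵥ A x *ᵥ grad d u x)) := by
  have hgrad : grad d (fun y => Real.exp (u y)) x = Real.exp (u x) • grad d u x :=
    funext fun _ => pd1_exp (hu.differentiableAt two_ne_zero)
  simp only [Lop, pd2_exp hu, hgrad, dotProduct_mulVec_self_eq_sum_sum, dotProduct_smul,
    smul_eq_mul, mul_left_comm _ (Real.exp (u x)), mul_add, Finset.sum_add_distrib,
    ← Finset.mul_sum]
  simp only [grad]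
  ring

theorem Fop_sub_Fop (hAbar : (Abar x).IsSymm) (V : (Fin d → ℝ) → ℝ) :
    Fop d A Abar B V f x - Fop d A Abar B V ψ x
      = Lop d A Abar B ψ f x - Lop d A Abar B ψ ψ x
        + 1 / 2 * ((grad d ψ x - grad d f x) ⬝ᵥ Abar x *ᵥ (grad d ψ x - grad d f x)) := by
  simp only [Fop, Lop, add_dotProduct, mulVec_sub, sub_dotProduct, dotProduct_sub,
    dotProduct_comm (Abar x *ᵥ grad d ψ x)]
  rw [dotProduct_mulVec_comm_of_isSymm hAbar (grad d f x) (grad d ψ x)]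
  ring

end Operators

theorem stmt2_general (d : ℕ) (E : Set (Fin d → ℝ)) (hE : IsOpen E)
    (A Abar : (Fin d → ℝ) → Matrix (Fin d) (Fin d) ℝ)
    (B : (Fin d → ℝ) → Fin d → ℝ) (V : (Fin d → ℝ) → ℝ) (κ : ℝ) (hκ : 0 < κ)
    (hAbarsymm : ∀ x ∈ E, (Abar x).IsSymm)
    (hell : ∀ x ∈ E, ∀ ξ : Fin d → ℝ,
      κ * (ξ ⬝ᵥ (A x).mulVec ξ) ≤ ξ ⬝ᵥ (Abar x).mulVec ξ)
    (φ ψ : (Fin d → ℝ) → ℝ)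
    (hφ : ContDiffOn ℝ 2 φ E) (hψ : ContDiffOn ℝ 2 ψ E) :
    ContDiffOn ℝ 2 (fun x => Real.exp (-κ * (ψ x - φ x))) E ∧
    ∀ x ∈ E,
      Lop d A Abar B ψ (fun y => Real.exp (-κ * (ψ y - φ y))) x
        ≤ κ * Real.exp (-κ * (ψ x - φ x)) *
            (Fop d A Abar B V φ x - Fop d A Abar B V ψ x) := by
  refine ⟨Real.contDiff_exp.comp_contDiffOn (contDiffOn_const.mul (hψ.sub hφ)), fun x hx => ?_⟩
  have hφx : ContDiffAt ℝ 2 φ x := hφ.contDiffAt (hE.mem_nhds hx)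
  have hψx : ContDiffAt ℝ 2 ψ x := hψ.contDiffAt (hE.mem_nhds hx)
  set a := grad d ψ x - grad d φ x
  have hgrad : grad d (fun y => -κ * (ψ y - φ y)) x = -κ • a := by
    rw [grad_const_mul ((hψx.sub hφx).differentiableAt two_ne_zero),
      grad_sub (hψx.differentiableAt two_ne_zero) (hφx.differentiableAt two_ne_zero)]
  have hLop : Lop d A Abar B ψ (fun y => -κ * (ψ y - φ y)) x
      = κ * (Lop d A Abar B ψ φ x - Lop d A Abar B ψ ψ x) := by
    rw [Lop_const_mul (hψx.sub hφx), Lop_sub hψx hφx]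
    ring
  rw [Lop_exp (contDiffAt_const.mul (hψx.sub hφx)), hLop, hgrad, Fop_sub_Fop (hAbarsymm x hx)]
  simp only [mulVec_smul, dotProduct_smul, smul_dotProduct, smul_eq_mul]
  have hw : 0 < Real.exp (-κ * (ψ x - φ x)) := Real.exp_pos _
  linarith [mul_le_mul_of_nonneg_left (hell x hx a) (mul_pos hκ hw).le]

/-- for `φ, ψ ∈ C²(E)`, the function `w = exp(-κ̲(ψ - φ))` is `C²` on `E`
and satisfies `𝒧^ψ w ≤ κ̲ w (𝔉[φ] - 𝔉[ψ])` pointwise on `E`. -/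
theorem stmt2 (d : ℕ) (E : Set (Fin d → ℝ)) (hE : IsOpen E)
    (A Abar : (Fin d → ℝ) → Matrix (Fin d) (Fin d) ℝ)
    (B : (Fin d → ℝ) → Fin d → ℝ) (V : (Fin d → ℝ) → ℝ) (κ : ℝ) (hκ : 0 < κ)
    (hAsymm : ∀ x ∈ E, (A x).IsSymm) (hAbarsymm : ∀ x ∈ E, (Abar x).IsSymm)
    (hell : ∀ x ∈ E, ∀ ξ : Fin d → ℝ,
      κ * (ξ ⬝ᵥ (A x).mulVec ξ) ≤ ξ ⬝ᵥ (Abar x).mulVec ξ)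
    (φ ψ : (Fin d → ℝ) → ℝ)
    (hφ : ContDiffOn ℝ 2 φ E) (hψ : ContDiffOn ℝ 2 ψ E) :
    ContDiffOn ℝ 2 (fun x => Real.exp (-κ * (ψ x - φ x))) E ∧
    ∀ x ∈ E,
      Lop d A Abar B ψ (fun y => Real.exp (-κ * (ψ y - φ y))) x
        ≤ κ * Real.exp (-κ * (ψ x - φ x)) *
            (Fop d A Abar B V φ x - Fop d A Abar B V ψ x) :=
  stmt2_general d E hE A Abar B V κ hκ hAbarsymm hell φ ψ hφ hψ

end Stmt2
end

section
/- Let d ≥ 1, c > 0, and let f, g be real symmetric d×d matrices with ξᵀfξ ≥ c|ξ|² and ξᵀgξ ≥ c|ξ|² for all ξ ∈ ℝ^d. Then for every real symmetric d×d matrix θ one has Tr(f θ g θ) ≥ c² ‖θ‖², where ‖θ‖ = √Tr(θᵀθ) is the Frobenius norm. In particular, Tr(f θ g θ) > 0 whenever θ ≠ 0. -/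
open Matrix

/-!
Since `f - c` is positive semidefinite and the trace of a product of two positive semidefinite
matrices is nonnegative (`Tr (A C*C) = Tr (C A C*)`), we get `c · Tr B ≤ Tr (f B)` for every
positive semidefinite `B`. Apply this first to `B = θ g θ` and then, after cycling the
trace, with `g` in place of `f` to `B = θ θ`.
-/

open scoped MatrixOrder ComplexOrder

namespace Matrix

section RCLike

variable {n 𝕜 : Type*} [Fintype n] [RCLike 𝕜]

theorem PosSemidef.trace_mul_nonneg {A B : Matrix n n 𝕜} (hA : A.PosSemidef)
    (hB : B.PosSemidef) : 0 ≤ (A * B).trace := by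
  classical
  obtain ⟨C, rfl⟩ := CStarAlgebra.nonneg_iff_eq_star_mul_self.mp hB.nonneg
  rw [star_eq_conjTranspose, ← mul_assoc, trace_mul_comm, ← mul_assoc]
  exact (hA.mul_mul_conjTranspose_same C).trace_nonneg

theorem smul_trace_le_trace_mul [DecidableEq n] {A B : Matrix n n 𝕜} {c : 𝕜}
    (hA : (A - c • 1).PosSemidef) (hB : B.PosSemidef) : c * B.trace ≤ (A * B).trace := by
  have h := hA.trace_mul_nonneg hB
  rwa [sub_mul, trace_sub, smul_mul, one_mul, trace_smul, smul_eq_mul, sub_nonneg] at h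

end RCLike

section Real

variable {m n : Type*}

theorem posSemidef_sub_smul_one [Fintype n] [DecidableEq n] {A : Matrix n n ℝ} {c : ℝ}
    (hA : A.IsSymm) (h : ∀ ξ : n → ℝ, c * (ξ ⬝ᵥ ξ) ≤ ξ ⬝ᵥ A *ᵥ ξ) :
    (A - c • 1).PosSemidef := by
  refine .of_dotProduct_mulVec_nonneg ?_ fun ξ => ?_
  · exact isHermitian_iff_isSymm.mpr (hA.sub (isSymm_one.smul c))
  · rw [star_trivial, sub_mulVec, smul_mulVec, one_mulVec, dotProduct_sub, dotProduct_smul,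
      smul_eq_mul, sub_nonneg]
    exact h ξ

theorem PosSemidef.of_posSemidef_sub_smul_one [DecidableEq n] {A : Matrix n n ℝ} {c : ℝ}
    (hc : 0 ≤ c) (hA : (A - c • 1).PosSemidef) : A.PosSemidef := by
  simpa using hA.add ((PosSemidef.one (n := n)).smul hc)

theorem trace_transpose_mul_self_pos [Fintype m] [Fintype n] {A : Matrix m n ℝ} (hA : A ≠ 0) :
    0 < (Aᵀ * A).trace := by
  rw [← conjTranspose_eq_transpose_of_trivial]
  exact (posSemidef_conjTranspose_mul_self A).trace_nonneg.lt_of_ne'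
    (trace_conjTranspose_mul_self_eq_zero_iff.not.mpr hA)

end Real

end Matrix

theorem stmt4_general (d : ℕ) (c : ℝ) (hc : 0 < c)
    (f g : Matrix (Fin d) (Fin d) ℝ) (hf : f.IsSymm) (hg : g.IsSymm)
    (hfl : ∀ ξ : Fin d → ℝ, c * (ξ ⬝ᵥ ξ) ≤ ξ ⬝ᵥ f.mulVec ξ)
    (hgl : ∀ ξ : Fin d → ℝ, c * (ξ ⬝ᵥ ξ) ≤ ξ ⬝ᵥ g.mulVec ξ) :
    ∀ θ : Matrix (Fin d) (Fin d) ℝ, θ.IsSymm →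
      c ^ 2 * (θᵀ * θ).trace ≤ (f * θ * g * θ).trace ∧
      (θ ≠ 0 → 0 < (f * θ * g * θ).trace) := by
  intro θ hθ
  have hf' := posSemidef_sub_smul_one hf hfl
  have hg' := posSemidef_sub_smul_one hg hgl
  have hθθ : (θᴴ * θ).PosSemidef := posSemidef_conjTranspose_mul_self θ
  have hθgθ : (θᴴ * g * θ).PosSemidef :=
    (hg'.of_posSemidef_sub_smul_one hc.le).conjTranspose_mul_mul_same θ
  rw [conjTranspose_eq_transpose_of_trivial, hθ.eq] at hθθ hθgθ
  have hmain : c ^ 2 * (θᵀ * θ).trace ≤ (f * θ * g * θ).trace :=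
    calc c ^ 2 * (θᵀ * θ).trace = c * (c * (θ * θ).trace) := by rw [hθ.eq]; ring
      _ ≤ c * (g * (θ * θ)).trace := by gcongr; exact smul_trace_le_trace_mul hg' hθθ
      _ = c * (θ * g * θ).trace := by rw [trace_mul_cycle, trace_mul_comm]
      _ ≤ (f * (θ * g * θ)).trace := smul_trace_le_trace_mul hf' hθgθ
      _ = (f * θ * g * θ).trace := by simp only [mul_assoc]
  exact ⟨hmain, fun hθ0 =>
    (mul_pos (pow_pos hc 2) (trace_transpose_mul_self_pos hθ0)).trans_le hmain⟩

/-- if `f, g` are symmetric with quadratic forms bounded below by `c|ξ|²`,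
then for every symmetric `θ`, `Tr(fθgθ) ≥ c²‖θ‖²` (Frobenius norm squared `= Tr(θᵀθ)`),
and hence `Tr(fθgθ) > 0` whenever `θ ≠ 0`. -/
theorem stmt4 (d : ℕ) (hd : 1 ≤ d) (c : ℝ) (hc : 0 < c)
    (f g : Matrix (Fin d) (Fin d) ℝ) (hf : f.IsSymm) (hg : g.IsSymm)
    (hfl : ∀ ξ : Fin d → ℝ, c * (ξ ⬝ᵥ ξ) ≤ ξ ⬝ᵥ f.mulVec ξ)
    (hgl : ∀ ξ : Fin d → ℝ, c * (ξ ⬝ᵥ ξ) ≤ ξ ⬝ᵥ g.mulVec ξ) :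
    ∀ θ : Matrix (Fin d) (Fin d) ℝ, θ.IsSymm →
      c ^ 2 * (θᵀ * θ).trace ≤ (f * θ * g * θ).trace ∧
      (θ ≠ 0 → 0 < (f * θ * g * θ).trace) :=
  stmt4_general d c hc f g hf hg hfl hgl
end

section
/- Let d ≥ 1 and F, G be real d×d matrices. For i, j ∈ {1,…,d} define the d×d matrix a^{ij} by (a^{ij})_{kl} := F_{ik}G_{lj} + F_{jk}G_{li}, and set f := FFᵀ, g := GᵀG. Then for all real symmetric d×d matrices θ and ψ: Σ_{i,j,k,l=1}^d θ_{ij} Tr(a^{ij}(a^{kl})ᵀ) ψ_{kl} = 4 Tr(f ψ g θ). -/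
/-!
The quadruple sum is bilinear in `(θ, ψ)`: it is the Frobenius pairing `Tr(A_θ A_ψᵀ)` of the
contractions `A_S = Σ_{ij} S_ij a^{ij}`. From the formula for `a^{ij}`, `A_S = Fᵀ (S + Sᵀ) Gᵀ`,
which is `2 Fᵀ S Gᵀ` for symmetric `S`. Transposing and cycling the trace of
`4 Fᵀ θ Gᵀ G ψᵀ F` then gives `4 Tr(F Fᵀ ψ Gᵀ G θ)`.
-/

open Matrix

theorem Matrix.sum_mul_trace_mul_transpose_mul {ι m n R : Type*} [Fintype ι] [Fintype m]
    [Fintype n] [CommSemiring R] (a b : ι → ι → Matrix m n R) (θ ψ : Matrix ι ι R) :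
    ∑ i, ∑ j, ∑ k, ∑ l, θ i j * (a i j * (b k l)ᵀ).trace * ψ k l
      = ((∑ i, ∑ j, θ i j • a i j) * (∑ k, ∑ l, ψ k l • b k l)ᵀ).trace := by
  simp only [transpose_sum, transpose_smul, Matrix.sum_mul]
  simp only [Matrix.mul_sum, Matrix.smul_mul, Matrix.mul_smul, trace_sum, trace_smul, smul_eq_mul]
  refine Finset.sum_congr rfl fun _ _ => Finset.sum_congr rfl fun _ _ =>
    Finset.sum_congr rfl fun _ _ => Finset.sum_congr rfl fun _ _ => by ring

theorem Matrix.sum_smul_eq_transpose_mul_add_transpose_mul {ι m n R : Type*} [Fintype ι]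
    [CommSemiring R] (F : Matrix ι m R) (G : Matrix n ι R) (a : ι → ι → Matrix m n R)
    (ha : ∀ i j k l, a i j k l = F i k * G l j + F j k * G l i) (θ : Matrix ι ι R) :
    ∑ i, ∑ j, θ i j • a i j = Fᵀ * (θ + θᵀ) * Gᵀ := by
  ext k l
  simp only [sum_apply, smul_apply, smul_eq_mul, ha, mul_apply, transpose_apply, add_apply,
    Finset.sum_mul, mul_add, add_mul, Finset.sum_add_distrib]
  congr 1
  · rw [Finset.sum_comm]
    exact Finset.sum_congr rfl fun _ _ => Finset.sum_congr rfl fun _ _ => by ring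
  · exact Finset.sum_congr rfl fun _ _ => Finset.sum_congr rfl fun _ _ => by ring

theorem Matrix.trace_mul_transpose_mul_transpose_of_isSymm {ι m n R : Type*} [Fintype ι]
    [Fintype m] [Fintype n] [CommSemiring R] (F : Matrix ι m R) (G : Matrix n ι R)
    (θ ψ : Matrix ι ι R) (hθ : θ.IsSymm) :
    (Fᵀ * θ * Gᵀ * (Fᵀ * ψ * Gᵀ)ᵀ).trace = (F * Fᵀ * ψ * (Gᵀ * G) * θ).trace := by
  rw [← trace_transpose]
  simp only [transpose_mul, transpose_transpose, hθ.eq, Matrix.mul_assoc]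
  rw [trace_mul_comm F]
  simp only [Matrix.mul_assoc]

theorem stmt5_general (d : ℕ) (F G : Matrix (Fin d) (Fin d) ℝ)
    (a : Fin d → Fin d → Matrix (Fin d) (Fin d) ℝ)
    (ha : ∀ i j k l, a i j k l = F i k * G l j + F j k * G l i)
    (θ ψ : Matrix (Fin d) (Fin d) ℝ) (hθ : θ.IsSymm) (hψ : ψ.IsSymm) :
    ∑ i, ∑ j, ∑ k, ∑ l, θ i j * (a i j * (a k l)ᵀ).trace * ψ k l
      = 4 * ((F * Fᵀ) * ψ * (Gᵀ * G) * θ).trace := by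
  have contract : ∀ S : Matrix (Fin d) (Fin d) ℝ, S.IsSymm →
      ∑ i, ∑ j, S i j • a i j = (2 : ℝ) • (Fᵀ * S * Gᵀ) := fun S hS => by
    rw [sum_smul_eq_transpose_mul_add_transpose_mul F G a ha, hS.eq, ← two_smul ℝ S,
      Matrix.mul_smul, Matrix.smul_mul]
  rw [sum_mul_trace_mul_transpose_mul, contract θ hθ, contract ψ hψ, transpose_smul,
    Matrix.smul_mul, Matrix.mul_smul, trace_smul, trace_smul,
    trace_mul_transpose_mul_transpose_of_isSymm F G θ ψ hθ, smul_smul, smul_eq_mul]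
  norm_num

/-- with `(a^{ij})_{kl} = F_{ik}G_{lj} + F_{jk}G_{li}`, `f = FFᵀ`, `g = GᵀG`,
for all symmetric `θ, ψ`:
`Σ_{ijkl} θ_{ij} Tr(a^{ij}(a^{kl})ᵀ) ψ_{kl} = 4 Tr(f ψ g θ)`. -/
theorem stmt5 (d : ℕ) (hd : 1 ≤ d) (F G : Matrix (Fin d) (Fin d) ℝ)
    (a : Fin d → Fin d → Matrix (Fin d) (Fin d) ℝ)
    (ha : ∀ i j k l, a i j k l = F i k * G l j + F j k * G l i)
    (θ ψ : Matrix (Fin d) (Fin d) ℝ) (hθ : θ.IsSymm) (hψ : ψ.IsSymm) :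
    ∑ i, ∑ j, ∑ k, ∑ l, θ i j * (a i j * (a k l)ᵀ).trace * ψ k l
      = 4 * ((F * Fᵀ) * ψ * (Gᵀ * G) * θ).trace :=
  stmt5_general d F G a ha θ ψ hθ hψ
end

section
/- Let d ≥ 1 and F, G be real d×d matrices. For i, j ∈ {1,…,d} define the d×d matrix a^{ij} by (a^{ij})_{kl} := F_{ik}G_{lj} + F_{jk}G_{li}, and set f := FFᵀ, g := GᵀG. Then for every invertible real symmetric d×d matrix x: Σ_{i,j,k,l=1}^d Tr(a^{ij}(a^{kl})ᵀ) (x^{-1})_{il}(x^{-1})_{jk} = 2 Tr(f x^{-1} g x^{-1}) + 2 Tr(f x^{-1}) Tr(g x^{-1}). -/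
/-!
Expanding the trace gives `Tr(a^{ij}(a^{kl})ᵀ) = f_ik g_jl + f_il g_jk + f_jk g_il + f_jl g_ik`.
The relabelling `(i, j, k, l) ↦ (j, i, l, k)` preserves `y_il y_jk` and exchanges the first term
with the last and the second with the third; contracted against `y_il y_jk`, the first term gives
`Tr(f yᵀ g yᵀ)` and the second `Tr(f yᵀ) Tr(g yᵀ)`. This holds for every square `y`; for `y = x⁻¹`
with `x` symmetric, `yᵀ = y`.
-/

open Matrix Finset

theorem Finset.sum_sum_sum_rotate {α β γ M : Type*} [Fintype α] [Fintype β] [Fintype γ]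
    [AddCommMonoid M] (t : α → β → γ → M) :
    ∑ a, ∑ b, ∑ c, t a b c = ∑ c, ∑ a, ∑ b, t a b c :=
  (sum_congr rfl fun _ _ => sum_comm).trans sum_comm

theorem Finset.two_mul_sum_eq_sum_add_swap {α β R : Type*} [Fintype α] [Fintype β]
    [NonAssocSemiring R] (t : α → α → β → β → R) :
    2 * ∑ i, ∑ j, ∑ k, ∑ l, t i j k l = ∑ i, ∑ j, ∑ k, ∑ l, (t i j k l + t j i l k) := by
  have hswap : ∑ i, ∑ j, ∑ k, ∑ l, t j i l k = ∑ i, ∑ j, ∑ k, ∑ l, t i j k l :=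
    sum_comm.trans (sum_congr rfl fun _ _ => sum_congr rfl fun _ _ => sum_comm)
  simp only [sum_add_distrib, hswap, two_mul]

namespace Matrix

theorem trace_mul_transpose_eq_sum {m n R : Type*} [Fintype m] [Fintype n] [AddCommMonoid R]
    [Mul R] (A B : Matrix m n R) : (A * Bᵀ).trace = ∑ p, ∑ q, A p q * B p q := by
  simp only [trace, diag_apply, mul_apply, transpose_apply]

variable {n m m' R : Type*} [Fintype m] [Fintype m'] [CommSemiring R]

theorem trace_mul_transpose_of_apply_eq (F : Matrix n m R) (G : Matrix m' n R)
    (a : n → n → Matrix m m' R) (ha : ∀ i j k l, a i j k l = F i k * G l j + F j k * G l i)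
    (i j k l : n) :
    (a i j * (a k l)ᵀ).trace
      = (F * Fᵀ) i k * (Gᵀ * G) j l + (F * Fᵀ) i l * (Gᵀ * G) j k
        + (F * Fᵀ) j k * (Gᵀ * G) i l + (F * Fᵀ) j l * (Gᵀ * G) i k := by
  simp only [trace_mul_transpose_eq_sum, ha, mul_apply, transpose_apply, sum_mul_sum,
    ← sum_add_distrib]
  exact sum_congr rfl fun p _ => sum_congr rfl fun q _ => by ring

variable [Fintype n]

theorem sum_mul_mul_mul_eq_trace (f g y : Matrix n n R) :
    ∑ i, ∑ j, ∑ k, ∑ l, f i k * g j l * y i l * y j k = (f * yᵀ * g * yᵀ).trace := by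
  simp only [trace, diag_apply, mul_apply, transpose_apply, sum_mul]
  refine sum_congr rfl fun i _ => (sum_sum_sum_rotate _).trans ?_
  exact sum_congr rfl fun l _ => sum_congr rfl fun j _ => sum_congr rfl fun k _ => by ring

theorem sum_mul_mul_mul_eq_trace_mul_trace (f g y : Matrix n n R) :
    ∑ i, ∑ j, ∑ k, ∑ l, f i l * g j k * y i l * y j k = (f * yᵀ).trace * (g * yᵀ).trace := by
  simp only [trace, diag_apply, mul_apply, transpose_apply, sum_mul_sum]
  refine sum_congr rfl fun i _ => sum_congr rfl fun j _ => sum_comm.trans ?_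
  exact sum_congr rfl fun l _ => sum_congr rfl fun k _ => by ring

theorem sum_trace_mul_transpose_mul_mul_of_apply_eq (F : Matrix n m R) (G : Matrix m' n R)
    (a : n → n → Matrix m m' R) (ha : ∀ i j k l, a i j k l = F i k * G l j + F j k * G l i)
    (y : Matrix n n R) :
    ∑ i, ∑ j, ∑ k, ∑ l, (a i j * (a k l)ᵀ).trace * y i l * y j k
      = 2 * (F * Fᵀ * yᵀ * (Gᵀ * G) * yᵀ).trace
        + 2 * (F * Fᵀ * yᵀ).trace * (Gᵀ * G * yᵀ).trace := by
  rw [← sum_mul_mul_mul_eq_trace, mul_assoc, ← sum_mul_mul_mul_eq_trace_mul_trace,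
    two_mul_sum_eq_sum_add_swap, two_mul_sum_eq_sum_add_swap]
  simp only [trace_mul_transpose_of_apply_eq F G a ha, ← sum_add_distrib]
  exact sum_congr rfl fun i _ => sum_congr rfl fun j _ => sum_congr rfl fun k _ =>
    sum_congr rfl fun l _ => by ring

end Matrix

theorem stmt7_general (d : ℕ) (F G : Matrix (Fin d) (Fin d) ℝ)
    (a : Fin d → Fin d → Matrix (Fin d) (Fin d) ℝ)
    (ha : ∀ i j k l, a i j k l = F i k * G l j + F j k * G l i)
    (x : Matrix (Fin d) (Fin d) ℝ) (hx : x.IsSymm) :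
    ∑ i, ∑ j, ∑ k, ∑ l, (a i j * (a k l)ᵀ).trace * x⁻¹ i l * x⁻¹ j k
      = 2 * ((F * Fᵀ) * x⁻¹ * (Gᵀ * G) * x⁻¹).trace
        + 2 * ((F * Fᵀ) * x⁻¹).trace * ((Gᵀ * G) * x⁻¹).trace := by
  have hinv : x⁻¹ᵀ = x⁻¹ := by rw [transpose_nonsing_inv, hx.eq]
  simpa only [hinv] using sum_trace_mul_transpose_mul_mul_of_apply_eq F G a ha x⁻¹

/-- with `(a^{ij})_{kl} = F_{ik}G_{lj} + F_{jk}G_{li}`, `f = FFᵀ`, `g = GᵀG`,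
for every invertible symmetric `x`:
`Σ_{ijkl} Tr(a^{ij}(a^{kl})ᵀ)(x⁻¹)_{il}(x⁻¹)_{jk} = 2Tr(f x⁻¹ g x⁻¹) + 2Tr(f x⁻¹)Tr(g x⁻¹)`. -/
theorem stmt7 (d : ℕ) (hd : 1 ≤ d) (F G : Matrix (Fin d) (Fin d) ℝ)
    (a : Fin d → Fin d → Matrix (Fin d) (Fin d) ℝ)
    (ha : ∀ i j k l, a i j k l = F i k * G l j + F j k * G l i)
    (x : Matrix (Fin d) (Fin d) ℝ) (hx : x.IsSymm) (hxinv : IsUnit x.det) :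
    ∑ i, ∑ j, ∑ k, ∑ l, (a i j * (a k l)ᵀ).trace * x⁻¹ i l * x⁻¹ j k
      = 2 * ((F * Fᵀ) * x⁻¹ * (Gᵀ * G) * x⁻¹).trace
        + 2 * ((F * Fᵀ) * x⁻¹).trace * ((Gᵀ * G) * x⁻¹).trace :=
  stmt7_general d F G a ha x hx
end

section
/- Let d ≥ 1 and let n₀ > 0, κ̄ > 0, c̄ > 0, α₁ > 0, C₁ > 0 and β₁ ∈ ℝ. Let x be a real symmetric positive definite d×d matrix with ‖x‖ > n₀ + 2, and let f, g be real symmetric positive semidefinite d×d matrices and B a real symmetric d×d matrix satisfying Tr(f)·Tr(g) ≤ α₁‖x‖ and Tr(Bx) ≤ −β₁‖x‖² + C₁. Then (c̄/‖x‖)·( Tr(fg) + Tr(f)Tr(g) + (4c̄κ̄/‖x‖ − 2/‖x‖²)·Tr(f x g x) + Tr(Bx) ) ≤ 2α₁c̄ + C₁c̄/(n₀+2) + (4κ̄α₁c̄² − β₁c̄)·‖x‖. -/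
/-!
For positive semidefinite `A`, `B` the `2 × 2` principal minors give `A i j ^ 2 ≤ A i i * A j j`,
so by AM-GM `Tr(AB) = ∑ A i j * B i j ≤ Tr A * Tr B`, while the Schur product theorem gives
`0 ≤ Tr(AB)`. As `Tr(fxgx) = Tr((xfx)g)` with `xfx` positive semidefinite, `Tr(fxgx)` lies between
`0` and `Tr f * Tr g * ‖x‖²`: the `-2/‖x‖²` term can be dropped and the `κ̄` term is at most
`4c̄κ̄α₁‖x‖²`. Inserting the drift bound on `Tr(Bx)` and `‖x‖ > n₀ + 2` in the `C₁` term finishes.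
-/

open Matrix

theorem Matrix.posSemidef_transpose_mul_self {m n : Type*} [Fintype m] [Finite n]
    (x : Matrix m n ℝ) : (xᵀ * x).PosSemidef := by
  simpa [conjTranspose_eq_transpose_of_trivial] using posSemidef_conjTranspose_mul_self x

theorem Matrix.trace_mul_mul_mul_mul_eq {n R : Type*} [Fintype n] [CommSemiring R]
    (A B x : Matrix n n R) : (A * x * B * x).trace = (x * A * x * B).trace := by
  rw [trace_mul_comm]
  simp only [Matrix.mul_assoc]

namespace Matrix.PosSemidef

variable {n : Type*} {A B : Matrix n n ℝ}

theorem transpose_eq (hA : A.PosSemidef) : Aᵀ = A := by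
  rw [← conjTranspose_eq_transpose_of_trivial, hA.isHermitian.eq]

theorem sq_apply_le (hA : A.PosSemidef) (i j : n) : A i j ^ 2 ≤ A i i * A j j := by
  classical
  have hdet := (hA.submatrix ![i, j]).det_nonneg
  have hsymm : A j i = A i j := congrFun (congrFun hA.transpose_eq i) j
  simp only [det_fin_two, submatrix_apply, Matrix.cons_val_zero, Matrix.cons_val_one] at hdet
  rw [hsymm, ← sq] at hdet
  linarith

theorem mul_apply_le (hA : A.PosSemidef) (hB : B.PosSemidef) (i j : n) :
    A i j * B i j ≤ (A i i * B j j + A j j * B i i) / 2 := by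
  have hAi := hA.diag_nonneg (i := i)
  have hBi := hB.diag_nonneg (i := i)
  have hAj := hA.diag_nonneg (i := j)
  have hBj := hB.diag_nonneg (i := j)
  refine le_of_sq_le_sq ?_ (by positivity)
  calc (A i j * B i j) ^ 2 = A i j ^ 2 * B i j ^ 2 := mul_pow _ _ _
    _ ≤ (A i i * A j j) * (B i i * B j j) :=
      mul_le_mul (hA.sq_apply_le i j) (hB.sq_apply_le i j) (sq_nonneg _) (by positivity)
    _ ≤ ((A i i * B j j + A j j * B i i) / 2) ^ 2 := by
      nlinarith [sq_nonneg (A i i * B j j - A j j * B i i)]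

variable [Fintype n]

theorem trace_mul_eq_sum_mul_apply (hB : B.PosSemidef) :
    (A * B).trace = ∑ i, ∑ j, A i j * B i j := by
  rw [← hB.transpose_eq, ← sum_hadamard_eq, hB.transpose_eq]
  rfl

theorem trace_mul_nonneg_s13 (hA : A.PosSemidef) (hB : B.PosSemidef) : 0 ≤ (A * B).trace := by
  have h := (hA.hadamard hB).dotProduct_mulVec_nonneg 1
  simpa [hB.trace_mul_eq_sum_mul_apply, dotProduct, mulVec, Finset.mul_sum] using h

theorem trace_mul_le (hA : A.PosSemidef) (hB : B.PosSemidef) :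
    (A * B).trace ≤ A.trace * B.trace := by
  calc (A * B).trace = ∑ i, ∑ j, A i j * B i j := hB.trace_mul_eq_sum_mul_apply
    _ ≤ ∑ i, ∑ j, (A i i * B j j + A j j * B i i) / 2 := by
      gcongr with i _ j _
      exact hA.mul_apply_le hB i j
    _ = A.trace * B.trace := by
      simp only [trace, diag, add_div, Finset.sum_add_distrib, ← Finset.sum_div,
        Finset.sum_mul_sum]
      rw [Finset.sum_comm (f := fun i j => A j j * B i i)]
      simp only [mul_comm (A _ _)]
      ring

variable {x : Matrix n n ℝ}

theorem mul_mul_same_of_isSymm (hA : A.PosSemidef) (hx : x.IsSymm) :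
    (x * A * x).PosSemidef := by
  simpa [conjTranspose_eq_transpose_of_trivial, hx.eq] using hA.mul_mul_conjTranspose_same x

theorem trace_mul_mul_mul_mul_nonneg (hA : A.PosSemidef) (hB : B.PosSemidef) (hx : x.IsSymm) :
    0 ≤ (A * x * B * x).trace := by
  rw [trace_mul_mul_mul_mul_eq]
  exact (hA.mul_mul_same_of_isSymm hx).trace_mul_nonneg_s13 hB

theorem trace_mul_mul_mul_mul_le (hA : A.PosSemidef) (hB : B.PosSemidef) (hx : x.IsSymm) :
    (A * x * B * x).trace ≤ A.trace * B.trace * (xᵀ * x).trace := by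
  calc (A * x * B * x).trace = (x * A * x * B).trace := trace_mul_mul_mul_mul_eq A B x
    _ ≤ (x * A * x).trace * B.trace := (hA.mul_mul_same_of_isSymm hx).trace_mul_le hB
    _ = (A * (xᵀ * x)).trace * B.trace := by
      rw [hx.eq, trace_mul_cycle, trace_mul_comm]
    _ ≤ A.trace * (xᵀ * x).trace * B.trace := by
      gcongr
      · exact hB.trace_nonneg
      · exact hA.trace_mul_le (posSemidef_transpose_mul_self x)
    _ = A.trace * B.trace * (xᵀ * x).trace := by ring

end Matrix.PosSemidef

theorem norm_part_generator_le {s r κ cb α₁ C₁ β₁ P Q T b : ℝ}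
    (hr : 0 < r) (hrs : r ≤ s) (hκ : 0 ≤ κ) (hcb : 0 ≤ cb) (hC₁ : 0 ≤ C₁)
    (hPQ : P ≤ Q) (hQ : Q ≤ α₁ * s) (hT₀ : 0 ≤ T) (hT : T ≤ Q * s ^ 2)
    (hb : b ≤ -β₁ * s ^ 2 + C₁) :
    cb / s * (P + Q + (4 * cb * κ / s - 2 / s ^ 2) * T + b)
      ≤ 2 * α₁ * cb + C₁ * cb / r + (4 * κ * α₁ * cb ^ 2 - β₁ * cb) * s := by
  have hs : 0 < s := hr.trans_le hrs
  have hTterm : (4 * cb * κ / s - 2 / s ^ 2) * T ≤ 4 * cb * κ * α₁ * s ^ 2 :=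
    calc (4 * cb * κ / s - 2 / s ^ 2) * T ≤ 4 * cb * κ / s * T := by
          gcongr
          exact sub_le_self _ (by positivity)
      _ ≤ 4 * cb * κ / s * (α₁ * s * s ^ 2) := by gcongr; exact hT.trans (by gcongr)
      _ = 4 * cb * κ * α₁ * s ^ 2 := by field_simp
  calc cb / s * (P + Q + (4 * cb * κ / s - 2 / s ^ 2) * T + b)
      ≤ cb / s * (2 * (α₁ * s) + 4 * cb * κ * α₁ * s ^ 2 + (-β₁ * s ^ 2 + C₁)) := by
        gcongr
        linarith
    _ = 2 * α₁ * cb + C₁ * cb / s + (4 * κ * α₁ * cb ^ 2 - β₁ * cb) * s := by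
        field_simp
        ring
    _ ≤ 2 * α₁ * cb + C₁ * cb / r + (4 * κ * α₁ * cb ^ 2 - β₁ * cb) * s := by gcongr

theorem stmt13_general (d : ℕ)
    (n₀ κ cb α₁ C₁ β₁ : ℝ)
    (hn₀ : 0 < n₀) (hκ : 0 < κ) (hcb : 0 < cb) (hC₁ : 0 < C₁)
    (x f g B : Matrix (Fin d) (Fin d) ℝ)
    (hx : x.PosDef) (hxn : n₀ + 2 < Real.sqrt ((xᵀ * x).trace))
    (hf : f.PosSemidef) (hg : g.PosSemidef)
    (hfg : f.trace * g.trace ≤ α₁ * Real.sqrt ((xᵀ * x).trace))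
    (hBx : (B * x).trace ≤ -β₁ * Real.sqrt ((xᵀ * x).trace) ^ 2 + C₁) :
    (cb / Real.sqrt ((xᵀ * x).trace)) *
        ((f * g).trace + f.trace * g.trace
          + (4 * cb * κ / Real.sqrt ((xᵀ * x).trace)
              - 2 / Real.sqrt ((xᵀ * x).trace) ^ 2) * (f * x * g * x).trace
          + (B * x).trace)
      ≤ 2 * α₁ * cb + C₁ * cb / (n₀ + 2)
          + (4 * κ * α₁ * cb ^ 2 - β₁ * cb) * Real.sqrt ((xᵀ * x).trace) := by
  have hxs : x.IsSymm := hx.posSemidef.transpose_eq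
  have hnorm_sq : Real.sqrt ((xᵀ * x).trace) ^ 2 = (xᵀ * x).trace :=
    Real.sq_sqrt (posSemidef_transpose_mul_self x).trace_nonneg
  refine norm_part_generator_le (by linarith) hxn.le hκ.le hcb.le hC₁.le (hf.trace_mul_le hg) hfg
    (hf.trace_mul_mul_mul_mul_nonneg hg hxs) ?_ hBx
  rw [hnorm_sq]
  exact hf.trace_mul_mul_mul_mul_le hg hxs

/-- the estimate on the norm part of the Lyapunov function in the region
`‖x‖ > n₀ + 2`, where `‖x‖ = √Tr(xᵀx)` is the Frobenius norm:
`(c̄/‖x‖)(Tr(fg) + Tr(f)Tr(g) + (4c̄κ̄/‖x‖ - 2/‖x‖²)Tr(fxgx) + Tr(Bx))`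
`  ≤ 2α₁c̄ + C₁c̄/(n₀+2) + (4κ̄α₁c̄² - β₁c̄)‖x‖`. -/
theorem stmt13 (d : ℕ) (hd : 1 ≤ d)
    (n₀ κ cb α₁ C₁ β₁ : ℝ)
    (hn₀ : 0 < n₀) (hκ : 0 < κ) (hcb : 0 < cb) (hα₁ : 0 < α₁) (hC₁ : 0 < C₁)
    (x f g B : Matrix (Fin d) (Fin d) ℝ)
    (hx : x.PosDef) (hxn : n₀ + 2 < Real.sqrt ((xᵀ * x).trace))
    (hf : f.PosSemidef) (hg : g.PosSemidef) (hB : B.IsSymm)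
    (hfg : f.trace * g.trace ≤ α₁ * Real.sqrt ((xᵀ * x).trace))
    (hBx : (B * x).trace ≤ -β₁ * Real.sqrt ((xᵀ * x).trace) ^ 2 + C₁) :
    (cb / Real.sqrt ((xᵀ * x).trace)) *
        ((f * g).trace + f.trace * g.trace
          + (4 * cb * κ / Real.sqrt ((xᵀ * x).trace)
              - 2 / Real.sqrt ((xᵀ * x).trace) ^ 2) * (f * x * g * x).trace
          + (B * x).trace)
      ≤ 2 * α₁ * cb + C₁ * cb / (n₀ + 2)
          + (4 * κ * α₁ * cb ^ 2 - β₁ * cb) * Real.sqrt ((xᵀ * x).trace) :=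
  stmt13_general d n₀ κ cb α₁ C₁ β₁ hn₀ hκ hcb hC₁ x f g B hx hxn hf hg hfg hBx
end

section
/- Let d ≥ 1 and let C be a real symmetric positive definite d×d matrix. Then for every M ∈ ℝ there exists ε > 0 such that every real symmetric positive definite d×d matrix x with det(x) < ε satisfies Tr(C x^{-1}) + log det(x) > M. In other words, Tr(C x^{-1}) + log det(x) → +∞ as det(x) ↓ 0 over positive definite x. -/
/-!
Writing `x⁻¹ = Sᴴ S`, the matrix `S C Sᴴ` is positive semidefinite with trace `Tr(C x⁻¹)` and
determinant `det C / det x`, so AM-GM on its eigenvalues gives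
`Tr(C x⁻¹) ≥ d (det C / det x)^(1/d)`. The right-hand side blows up like a negative power of
`det x`, which beats `log det x → -∞`.
-/

open Matrix Filter Topology

namespace Matrix

variable {n : Type*} [Fintype n] [DecidableEq n] [Nonempty n]

theorem PosSemidef.card_mul_det_rpow_le_trace {A : Matrix n n ℝ} (hA : A.PosSemidef) :
    Fintype.card n * A.det ^ (Fintype.card n : ℝ)⁻¹ ≤ A.trace := by
  have hcard : (0 : ℝ) < Fintype.card n := by exact_mod_cast Fintype.card_pos
  have amgm := Real.geom_mean_le_arith_mean Finset.univ (fun _ ↦ 1) hA.1.eigenvalues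
    (fun _ _ ↦ zero_le_one) (by simpa using hcard) (fun i _ ↦ hA.eigenvalues_nonneg i)
  simp only [Real.rpow_one, Finset.sum_const, Finset.card_univ, nsmul_eq_mul, mul_one,
    one_mul] at amgm
  rw [hA.1.det_eq_prod_eigenvalues, hA.1.trace_eq_sum_eigenvalues]
  simpa [le_div_iff₀' hcard] using amgm

open scoped MatrixOrder in
theorem PosSemidef.card_mul_rpow_det_mul_le_trace_mul {A B : Matrix n n ℝ} (hA : A.PosSemidef)
    (hB : B.PosSemidef) :
    Fintype.card n * (A.det * B.det) ^ (Fintype.card n : ℝ)⁻¹ ≤ (A * B).trace := by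
  obtain ⟨S, rfl⟩ := CStarAlgebra.nonneg_iff_eq_star_mul_self.mp hB.nonneg
  have hdet : (S * A * Sᴴ).det = A.det * (star S * S).det := by
    rw [det_mul, det_mul, det_mul, star_eq_conjTranspose]
    ring
  have htrace : (S * A * Sᴴ).trace = (A * (star S * S)).trace := by
    rw [star_eq_conjTranspose, trace_mul_cycle, ← mul_assoc, trace_mul_comm, mul_assoc]
  rw [← hdet, ← htrace]
  exact (hA.mul_mul_conjTranspose_same S).card_mul_det_rpow_le_trace

end Matrix

theorem tendsto_mul_div_rpow_add_log_nhdsGT_zero {a k p : ℝ} (ha : 0 < a) (hk : 0 < k)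
    (hp : 0 < p) : Tendsto (fun t ↦ a * (k / t) ^ p + Real.log t) (𝓝[>] 0) atTop := by
  have hbdd : Tendsto (fun t ↦ a * k ^ p + Real.log t * t ^ p) (𝓝[>] 0) (𝓝 (a * k ^ p)) := by
    simpa using tendsto_const_nhds.add (tendsto_log_mul_rpow_nhdsGT_zero hp)
  refine ((tendsto_rpow_neg_nhdsGT_zero (neg_neg_of_pos hp)).atTop_mul_pos (by positivity)
    hbdd).congr' ?_
  filter_upwards [self_mem_nhdsWithin] with t (ht : 0 < t)
  rw [mul_add, div_eq_mul_inv, Real.mul_rpow hk.le (inv_nonneg.2 ht.le), Real.inv_rpow ht.le,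
    Real.rpow_neg ht.le]
  field_simp

/-- for positive definite `C`, `Tr(Cx⁻¹) + log det(x) → +∞` as
`det(x) ↓ 0` over symmetric positive definite `x`: for every `M` there is `ε > 0`
such that any positive definite `x` with `det(x) < ε` satisfies
`Tr(Cx⁻¹) + log det(x) > M`. -/
theorem stmt16 (d : ℕ) (hd : 1 ≤ d) (C : Matrix (Fin d) (Fin d) ℝ) (hC : C.PosDef) :
    ∀ M : ℝ, ∃ ε > (0 : ℝ), ∀ x : Matrix (Fin d) (Fin d) ℝ, x.PosDef →
      x.det < ε → M < (C * x⁻¹).trace + Real.log x.det := by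
  intro M
  have : Nonempty (Fin d) := ⟨⟨0, hd⟩⟩
  have hd₀ : (0 : ℝ) < d := by exact_mod_cast hd
  have hlim := tendsto_mul_div_rpow_add_log_nhdsGT_zero hd₀ hC.det_pos (inv_pos.2 hd₀)
  obtain ⟨ε, hε, hsub⟩ := mem_nhdsGT_iff_exists_Ioo_subset.mp (hlim.eventually_gt_atTop M)
  refine ⟨ε, hε, fun x hx hxε ↦ (hsub ⟨hx.det_pos, hxε⟩).trans_le ?_⟩
  have amgm := hC.posSemidef.card_mul_rpow_det_mul_le_trace_mul hx.inv.posSemidef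
  rw [det_nonsing_inv, Ring.inverse_eq_inv', ← div_eq_mul_inv, Fintype.card_fin] at amgm
  exact add_le_add_left amgm _
end
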